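/- Separation in 𝒫ⁿ_{k,ε} (Theorem 9.4(C)): There exists a constant c(n) with 0 < c(n) < 1, depending only on n, such that for all positive integers k, all reals 0 < ε ≤ 1, and all θ₁, θ₂ ∈ 𝒫ⁿ_{k,ε} with θ₁ ≠ θ₂, one has G(θ₁ − θ₂) ≥ ε · c(n) / k^{3n}. -/

import Mathlib

noncomputable section

/-- The grid `Σ_k = [-1,1]ⁿ ∩ (1/k)·ℤⁿ` of the cube of mesh `1/k`. -/
def grid (n k : ℕ) : Set (EuclideanSpace ℝ (Fin n)) :=
  {x | (∀ i, |x i| ≤ 1) ∧ ∀ i, ∃ m : ℤ, x i = m / k}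

/-- Mass of a finitely supported function `θ : ℝⁿ → ℝ`, identified with the atomic
signed measure `Σ_x θ(x)·δ_x`: `M(θ) = Σ_x |θ(x)|`. -/
def massF (n : ℕ) (θ : EuclideanSpace ℝ (Fin n) →₀ ℝ) : ℝ :=
  ∑ x ∈ θ.support, |θ x|

/-- Dual Lipschitz norm of a finitely supported function `θ : ℝⁿ → ℝ`:
`G(θ) = sup { Σ_x θ(x)·φ(x) : φ 1-Lipschitz }`. -/
def GF (n : ℕ) (θ : EuclideanSpace ℝ (Fin n) →₀ ℝ) : ℝ :=
  sSup {r : ℝ | ∃ φ : EuclideanSpace ℝ (Fin n) → ℝ,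
    LipschitzWith 1 φ ∧ r = ∑ x ∈ θ.support, θ x * φ x}

/-- The net `𝒫ⁿ_{k,ε}`: finitely supported functions carried by the grid `Σ_k`,
with values in `ε̂·ℤ` where `ε̂ = ε/(2n(2k+1)ⁿ)`, total sum `0`, and mass at most
`k·ε`. -/
def Pset (n k : ℕ) (ε : ℝ) : Set (EuclideanSpace ℝ (Fin n) →₀ ℝ) :=
  {θ | ↑θ.support ⊆ grid n k ∧
    (∀ x, ∃ m : ℤ, θ x = (ε / (2 * n * (2 * k + 1) ^ n)) * m) ∧
    ∑ x ∈ θ.support, θ x = 0 ∧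
    ∑ x ∈ θ.support, |θ x| ≤ k * ε}

/-!
Two distinct elements of `𝒫ⁿ_{k,ε}` differ at some grid point `x₀` by a nonzero multiple of
`ε̂ = ε/(2n(2k+1)ⁿ)`, and every other point carrying mass of `θ₁ - θ₂` is a grid point, hence at
distance at least `1/k` from `x₀`. Pairing `θ₁ - θ₂` with the 1-Lipschitz tents
`±max(0, 1/k - |x - x₀|)` picks out the single atom at `x₀`, so
`G(θ₁ - θ₂) ≥ ε̂/k ≥ ε/(2n·3ⁿ·k^{3n})`.
-/

open Finset

lemma le_abs_mul_intCast {R : Type*} [Ring R] [LinearOrder R] [IsStrictOrderedRing R]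
    {a : R} (ha : 0 ≤ a) {m : ℤ} (hm : m ≠ 0) : a ≤ |a * m| := by
  rw [abs_mul, abs_of_nonneg ha, ← Int.cast_abs]
  exact le_mul_of_one_le_right ha (by exact_mod_cast Int.one_le_abs hm)

lemma one_div_le_dist_of_forall_eq_intCast_div {ι : Type*} [Fintype ι] {k : ℕ} (hk : 0 < k)
    {x y : EuclideanSpace ℝ ι} (hx : ∀ i, ∃ m : ℤ, x i = m / k) (hy : ∀ i, ∃ m : ℤ, y i = m / k)
    (hxy : x ≠ y) : 1 / (k : ℝ) ≤ dist x y := by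
  obtain ⟨i, hi⟩ : ∃ i, x i ≠ y i := by
    by_contra! h
    exact hxy (PiLp.ext h)
  obtain ⟨m, hm⟩ := hx i
  obtain ⟨m', hm'⟩ := hy i
  have hdiff : x i - y i = 1 / (k : ℝ) * ((m - m' : ℤ) : ℝ) := by
    rw [hm, hm']
    push_cast
    ring
  have hmm' : m - m' ≠ 0 := fun h => hi (by rw [hm, hm', sub_eq_zero.mp h])
  calc 1 / (k : ℝ) ≤ |x i - y i| := hdiff ▸ le_abs_mul_intCast (by positivity) hmm'
    _ = dist (x i) (y i) := (Real.dist_eq _ _).symm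
    _ ≤ dist x y := PiLp.dist_apply_le x y i

lemma lipschitzWith_one_tent {α : Type*} [PseudoMetricSpace α] (x₀ : α) (r : ℝ) :
    LipschitzWith 1 (fun x => max 0 (r - dist x x₀)) := by
  simpa using ((LipschitzWith.const r).sub (LipschitzWith.dist_left x₀)).const_max 0

section DualLipschitzNorm

variable {n : ℕ} {δ : EuclideanSpace ℝ (Fin n) →₀ ℝ}

/-- Total mass zero is what bounds the set defining `GF`: otherwise constant test functions make it
unbounded and `GF` is the junk value `0`. -/
lemma sum_mul_le_GF (hδ : ∑ x ∈ δ.support, δ x = 0) {φ : EuclideanSpace ℝ (Fin n) → ℝ}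
    (hφ : LipschitzWith 1 φ) : ∑ x ∈ δ.support, δ x * φ x ≤ GF n δ := by
  refine le_csSup ⟨∑ x ∈ δ.support, |δ x| * dist x 0, ?_⟩ ⟨φ, hφ, rfl⟩
  rintro _ ⟨ψ, hψ, rfl⟩
  have hshift : ∑ x ∈ δ.support, δ x * ψ x = ∑ x ∈ δ.support, δ x * (ψ x - ψ 0) := by
    simp only [mul_sub, sum_sub_distrib, ← sum_mul, hδ, zero_mul, sub_zero]
  rw [hshift]
  refine sum_le_sum fun x _ => ?_
  calc δ x * (ψ x - ψ 0) ≤ |δ x| * |ψ x - ψ 0| := by rw [← abs_mul]; exact le_abs_self _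
    _ ≤ |δ x| * dist x 0 := by
      gcongr
      simpa [Real.dist_eq] using hψ.dist_le_mul x 0

lemma abs_apply_mul_le_GF (hδ : ∑ x ∈ δ.support, δ x = 0) {x₀ : EuclideanSpace ℝ (Fin n)}
    {r : ℝ} (hr : 0 ≤ r) (hsep : ∀ x ∈ δ.support, x ≠ x₀ → r ≤ dist x x₀) :
    |δ x₀| * r ≤ GF n δ := by
  set φ := fun x => max 0 (r - dist x x₀)
  have hlip : LipschitzWith 1 φ := lipschitzWith_one_tent x₀ r
  have hφ : ∑ x ∈ δ.support, δ x * φ x = δ x₀ * r := by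
    rw [sum_eq_single x₀]
    · simp [φ, hr]
    · intro x hx hne
      simp [φ, hsep x hx hne]
    · intro hx₀
      simp [Finsupp.notMem_support_iff.mp hx₀]
  rw [← abs_of_nonneg hr, ← abs_mul, abs_le']
  constructor
  · exact hφ ▸ sum_mul_le_GF hδ hlip
  · have := sum_mul_le_GF hδ hlip.neg
    simpa only [Pi.neg_apply, mul_neg, sum_neg_distrib, hφ] using this

end DualLipschitzNorm

namespace Pset

variable {n k : ℕ} {ε : ℝ} {θ₁ θ₂ : EuclideanSpace ℝ (Fin n) →₀ ℝ}

lemma support_sub_subset_grid (hθ₁ : θ₁ ∈ Pset n k ε) (hθ₂ : θ₂ ∈ Pset n k ε) :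
    ↑(θ₁ - θ₂).support ⊆ grid n k := fun _ hx =>
  (mem_union.mp (Finsupp.support_sub hx)).elim (fun h => hθ₁.1 h) (fun h => hθ₂.1 h)

lemma sum_sub_eq_zero (hθ₁ : θ₁ ∈ Pset n k ε) (hθ₂ : θ₂ ∈ Pset n k ε) :
    ∑ x ∈ (θ₁ - θ₂).support, (θ₁ - θ₂) x = 0 := by
  have := Finsupp.sum_sub_index (f := θ₁) (g := θ₂) (h := fun _ v => v) fun _ _ _ => rfl
  rwa [Finsupp.sum, Finsupp.sum, Finsupp.sum, hθ₁.2.2.1, hθ₂.2.2.1, sub_zero] at this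

lemma le_abs_sub_apply (hθ₁ : θ₁ ∈ Pset n k ε) (hθ₂ : θ₂ ∈ Pset n k ε) (hε : 0 ≤ ε)
    {x : EuclideanSpace ℝ (Fin n)} (hx : θ₁ x ≠ θ₂ x) :
    ε / (2 * n * (2 * k + 1) ^ n) ≤ |(θ₁ - θ₂) x| := by
  obtain ⟨m₁, hm₁⟩ := hθ₁.2.1 x
  obtain ⟨m₂, hm₂⟩ := hθ₂.2.1 x
  have hm : m₁ - m₂ ≠ 0 := fun h => hx (by rw [hm₁, hm₂, sub_eq_zero.mp h])
  have hsub : (θ₁ - θ₂) x = ε / (2 * n * (2 * k + 1) ^ n) * ((m₁ - m₂ : ℤ) : ℝ) := by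
    rw [Finsupp.sub_apply, hm₁, hm₂]
    push_cast
    ring
  exact hsub ▸ le_abs_mul_intCast (by positivity) hm

end Pset

lemma two_mul_add_one_pow_mul_le {n k : ℕ} (hn : 0 < n) (hk : 0 < k) :
    ((2 * k + 1) ^ n * k : ℝ) ≤ 3 ^ n * (k : ℝ) ^ (3 * n) := by
  have hk1 : (1 : ℝ) ≤ k := by exact_mod_cast hk
  calc ((2 * k + 1) ^ n * k : ℝ) ≤ (3 * k) ^ n * k := by gcongr; linarith
    _ = 3 ^ n * (k : ℝ) ^ (n + 1) := by ring
    _ ≤ 3 ^ n * (k : ℝ) ^ (3 * n) := by gcongr; omega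

lemma mul_inv_div_pow_le {n k : ℕ} (hn : 0 < n) (hk : 0 < k) {ε : ℝ} (hε : 0 ≤ ε) :
    ε * (2 * n * 3 ^ n : ℝ)⁻¹ / (k : ℝ) ^ (3 * n) ≤ ε / (2 * n * (2 * k + 1) ^ n) * (1 / k) := by
  rw [mul_one_div, div_div, ← div_eq_mul_inv, div_div]
  apply div_le_div_of_nonneg_left hε (by positivity)
  have := two_mul_add_one_pow_mul_le hn hk
  have : (0 : ℝ) ≤ 2 * n := by positivity
  nlinarith

/-- Separation in `𝒫ⁿ_{k,ε}` (Theorem 9.4(C)): there is `0 < c(n) < 1` such that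
for all `k ≥ 1`, all `0 < ε ≤ 1`, and all distinct `θ₁, θ₂ ∈ 𝒫ⁿ_{k,ε}`,
`G(θ₁ - θ₂) ≥ ε · c(n) / k^{3n}`. -/
theorem stmt12 (n : ℕ) (hn : 0 < n) :
    ∃ c : ℝ, 0 < c ∧ c < 1 ∧ ∀ k : ℕ, 0 < k → ∀ ε : ℝ, 0 < ε → ε ≤ 1 →
      ∀ θ₁ ∈ Pset n k ε, ∀ θ₂ ∈ Pset n k ε, θ₁ ≠ θ₂ →
        ε * c / (k : ℝ) ^ (3 * n) ≤ GF n (θ₁ - θ₂) := by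
  refine ⟨(2 * n * 3 ^ n)⁻¹, by positivity, inv_lt_one_of_one_lt₀ ?_, ?_⟩
  · have h1 : (1 : ℝ) ≤ n := by exact_mod_cast hn
    have h3 : (1 : ℝ) ≤ 3 ^ n := one_le_pow₀ (by norm_num)
    nlinarith
  intro k hk ε hε _ θ₁ hθ₁ θ₂ hθ₂ hne
  obtain ⟨x₀, hx₀⟩ : ∃ x, θ₁ x ≠ θ₂ x := by
    by_contra! h
    exact hne (Finsupp.ext h)
  have hgrid := Pset.support_sub_subset_grid hθ₁ hθ₂
  have hx₀grid : x₀ ∈ grid n k :=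
    hgrid (Finsupp.mem_support_iff.mpr (by rwa [Finsupp.sub_apply, sub_ne_zero]))
  have hsep : ∀ x ∈ (θ₁ - θ₂).support, x ≠ x₀ → 1 / (k : ℝ) ≤ dist x x₀ := fun x hx hxx₀ =>
    one_div_le_dist_of_forall_eq_intCast_div hk (hgrid hx).2 hx₀grid.2 hxx₀
  calc ε * (2 * n * 3 ^ n : ℝ)⁻¹ / (k : ℝ) ^ (3 * n)
      ≤ ε / (2 * n * (2 * k + 1) ^ n) * (1 / k) := mul_inv_div_pow_le hn hk hε.le
    _ ≤ |(θ₁ - θ₂) x₀| * (1 / k) := by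
      gcongr
      exact Pset.le_abs_sub_apply hθ₁ hθ₂ hε.le hx₀
    _ ≤ GF n (θ₁ - θ₂) := abs_apply_mul_le_GF (Pset.sum_sub_eq_zero hθ₁ hθ₂) (by positivity) hsep
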